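/- Let Z₁,…,Z_n be i.i.d. standard Gaussians, η_v = ∑_i v_i Z_i on {−1,1}ⁿ, M_n = ∑_i |Z_i|, and v* = (sgn(Z_i))_i. There exist constants ε₀, δ₀ > 0 such that with probability tending to 1 as n → ∞, every v ∈ {−1,1}ⁿ with ∑_i v_i v_i* ≤ ε₀·n satisfies η_v ≤ (1−δ₀)·M_n. -/

import Mathlib

/-!
Write `v i * Z i = w i * |Z i|` with `w i = v i * v* i ∈ {-1, 1}`. Pointwise,
`(1 - w i) |Z i| ≥ c (1 - w i) - 2c · 1{|Z i| ≤ c}`, so summing,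
`M_n - η_v ≥ c (n - ⟪v, v*⟫) - 2c · #{i | |Z i| ≤ c}`.
Choose `c > 0` with `P(|Z| ≤ c) < 1/4` (the Gaussian has no atom at `0`). By the strong law,
almost surely for all large `n` we have `#{i | |Z i| ≤ c} ≤ n/4` and `M_n ≤ (E|Z| + 1) n`;
then `⟪v, v*⟫ ≤ n/4` forces `M_n - η_v ≥ cn/4 ≥ δ M_n` with `δ = c / (4 (E|Z| + 1))`.
-/

open MeasureTheory ProbabilityTheory Real Filter

noncomputable section

/-- A real random variable is a centered Gaussian if its law is `gaussianReal 0 v`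
for some variance `v`. -/
def IsCenteredGaussianRV {Ω : Type*} [MeasurableSpace Ω] (μ : Measure Ω) (X : Ω → ℝ) : Prop :=
  ∃ v : NNReal, Measure.map X μ = gaussianReal 0 v

/-- A finite family of real random variables is a centered (jointly) Gaussian vector if
every linear combination is a centered Gaussian random variable. -/
def IsCenteredGaussianVector {Ω V : Type*} [MeasurableSpace Ω] [Fintype V]
    (μ : Measure Ω) (η : V → Ω → ℝ) : Prop :=
  (∀ v, Measurable (η v)) ∧
    ∀ a : V → ℝ, IsCenteredGaussianRV μ (fun ω => ∑ v, a v * η v ω)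

open Finset Set Topology

theorem ae_tendsto_average_comp {Ω E : Type*} [MeasurableSpace Ω] [MeasurableSpace E]
    {μ : Measure Ω} {ν : Measure E} {Z : ℕ → Ω → E} (hmeas : ∀ i, Measurable (Z i))
    (hindep : iIndepFun Z μ) (hlaw : ∀ i, μ.map (Z i) = ν) {f : E → ℝ} (hf : Measurable f)
    (hint : Integrable f ν) :
    ∀ᵐ ω ∂μ, Tendsto (fun n : ℕ => (∑ i ∈ range n, f (Z i ω)) / n) atTop (𝓝 (∫ x, f x ∂ν)) := by
  have hident : ∀ i, IdentDistrib (Z i) (Z 0) μ μ := fun i =>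
    ⟨(hmeas i).aemeasurable, (hmeas 0).aemeasurable, by rw [hlaw, hlaw]⟩
  have hint0 : Integrable (f ∘ Z 0) μ := by
    rw [← hlaw 0] at hint
    exact (integrable_map_measure hf.aestronglyMeasurable (hmeas 0).aemeasurable).mp hint
  have hmean : ∫ ω, f (Z 0 ω) ∂μ = ∫ x, f x ∂ν := by
    rw [← hlaw 0, integral_map (hmeas 0).aemeasurable hf.aestronglyMeasurable]
  simpa only [hmean, Function.comp_apply] using strong_law_ae_real (fun i => f ∘ Z i) hint0
    (fun i j hij => (hindep.indepFun hij).comp hf hf) (fun i => (hident i).comp hf)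

theorem ae_eventually_sum_comp_le {Ω E : Type*} [MeasurableSpace Ω] [MeasurableSpace E]
    {μ : Measure Ω} {ν : Measure E} {Z : ℕ → Ω → E} (hmeas : ∀ i, Measurable (Z i))
    (hindep : iIndepFun Z μ) (hlaw : ∀ i, μ.map (Z i) = ν) {f : E → ℝ} (hf : Measurable f)
    (hint : Integrable f ν) {K : ℝ} (hK : ∫ x, f x ∂ν < K) :
    ∀ᵐ ω ∂μ, ∀ᶠ n : ℕ in atTop, ∑ i ∈ range n, f (Z i ω) ≤ K * n := by
  filter_upwards [ae_tendsto_average_comp hmeas hindep hlaw hf hint] with ω h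
  filter_upwards [h.eventually_lt_const hK, eventually_gt_atTop 0] with n hlt hn
  exact ((div_lt_iff₀ (by exact_mod_cast hn)).mp hlt).le

theorem tendsto_measureReal_one_of_ae_eventually_mem {Ω : Type*} [MeasurableSpace Ω]
    {μ : Measure Ω} [IsProbabilityMeasure μ] {A : ℕ → Set Ω} (hA : ∀ n, MeasurableSet (A n))
    (h : ∀ᵐ ω ∂μ, ∀ᶠ n in atTop, ω ∈ A n) :
    Tendsto (fun n => μ.real (A n)) atTop (𝓝 1) := by
  have := tendsto_measure_of_ae_tendsto_indicator_of_isFiniteMeasure atTop MeasurableSet.univ hA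
    (by simpa only [Set.mem_univ, iff_true] using h)
  simpa [measureReal_def, Function.comp_def] using
    (ENNReal.tendsto_toReal (measure_ne_top μ _)).comp this

theorem exists_pos_measureReal_Icc_lt (ν : Measure ℝ) [IsFiniteMeasure ν] {b ε : ℝ}
    (hb : ν {b} = 0) (hε : 0 < ε) :
    ∃ δ > 0, ν.real (Icc (b - δ) (b + δ)) < ε := by
  have h := (ENNReal.tendsto_toReal (measure_ne_top ν _)).comp
    (tendsto_measure_Icc_nhdsWithin_right' ν b)
  rw [hb, ENNReal.toReal_zero] at h
  exact ((h.eventually_lt_const hε).and self_mem_nhdsWithin).exists.imp fun δ h => ⟨h.2, h.1⟩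

theorem mul_le_abs_sub_add_indicator {v x c : ℝ} (hv : |v| ≤ 1) (hc : 0 ≤ c) :
    v * x ≤ |x| - c * (1 - v * (if 0 ≤ x then 1 else -1)) +
      2 * c * (Icc (-c) c).indicator (1 : ℝ → ℝ) x := by
  set w := v * (if 0 ≤ x then 1 else -1)
  have hvx : v * x = w * |x| := by
    by_cases hx : 0 ≤ x
    · simp [w, hx, abs_of_nonneg hx]
    · simp [w, hx, abs_of_neg (not_le.mp hx)]
  have hw : |w| ≤ 1 := by simp only [w]; split_ifs <;> simpa using hv
  obtain ⟨hw₁, hw₂⟩ := abs_le.mp hw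
  rw [hvx]
  by_cases hxc : x ∈ Icc (-c) c
  · have := abs_nonneg x
    rw [indicator_of_mem hxc, Pi.one_apply]
    nlinarith
  · have : c < |x| := not_le.mp fun h => hxc (abs_le.mp h)
    rw [indicator_of_notMem hxc]
    nlinarith

theorem sum_mul_le_one_sub_mul_sum_abs {ι : Type*} [Fintype ι] {v x : ι → ℝ} {c K : ℝ}
    (hc : 0 ≤ c) (hK : 0 < K) (hv : ∀ i, |v i| ≤ 1)
    (hsign : ∑ i, v i * (if 0 ≤ x i then 1 else -1) ≤ 1 / 4 * Fintype.card ι)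
    (hsmall : ∑ i, (Icc (-c) c).indicator (1 : ℝ → ℝ) (x i) ≤ 1 / 4 * Fintype.card ι)
    (habs : ∑ i, |x i| ≤ K * Fintype.card ι) :
    ∑ i, v i * x i ≤ (1 - c / (4 * K)) * ∑ i, |x i| := by
  have hpointwise : ∑ i, v i * x i ≤ ∑ i, |x i| -
      c * (Fintype.card ι - ∑ i, v i * (if 0 ≤ x i then 1 else -1)) +
      2 * c * ∑ i, (Icc (-c) c).indicator (1 : ℝ → ℝ) (x i) := by
    calc ∑ i, v i * x i
        ≤ ∑ i, (|x i| - c * (1 - v i * (if 0 ≤ x i then 1 else -1)) +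
            2 * c * (Icc (-c) c).indicator (1 : ℝ → ℝ) (x i)) :=
          Finset.sum_le_sum fun i _ => mul_le_abs_sub_add_indicator (hv i) hc
      _ = _ := by simp only [Finset.sum_add_distrib, Finset.sum_sub_distrib, ← Finset.mul_sum,
            Finset.sum_const, Finset.card_univ, nsmul_eq_mul, mul_one]
  have hdrop : c / (4 * K) * ∑ i, |x i| ≤ c / 4 * Fintype.card ι := by
    calc c / (4 * K) * ∑ i, |x i| ≤ c / (4 * K) * (K * Fintype.card ι) := by gcongr
      _ = c / 4 * Fintype.card ι := by field_simp
  nlinarith [mul_le_mul_of_nonneg_left hsign hc, mul_le_mul_of_nonneg_left hsmall hc]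

/-- Hypercube example, second part: with `η_v = ∑ᵢ vᵢ Zᵢ` on `{−1,1}ⁿ`,
`M_n = ∑ᵢ |Zᵢ|` and `v* = (sgn(Zᵢ))ᵢ`, there exist `ε₀, δ₀ > 0` such that with
probability tending to 1, every `v ∈ {−1,1}ⁿ` with `∑ᵢ vᵢ vᵢ* ≤ ε₀ n` satisfies
`η_v ≤ (1−δ₀) M_n`. -/
theorem stmt19 {Ω : Type*} [MeasurableSpace Ω] (μ : Measure Ω) [IsProbabilityMeasure μ]
    (Z : ℕ → Ω → ℝ) (hmeas : ∀ i, Measurable (Z i))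
    (hindep : iIndepFun Z μ)
    (hgauss : ∀ i, Measure.map (Z i) μ = gaussianReal 0 1) :
    ∃ ε₀ > (0:ℝ), ∃ δ₀ > (0:ℝ), Tendsto (fun n : ℕ =>
      (μ {ω | ∀ v : Fin n → ℝ, (∀ i, v i = 1 ∨ v i = -1) →
        (∑ i : Fin n, v i * (if 0 ≤ Z i ω then (1:ℝ) else -1)) ≤ ε₀ * n →
        ∑ i : Fin n, v i * Z i ω ≤ (1 - δ₀) * ∑ i : Fin n, |Z i ω|}).toReal)
      atTop (nhds 1) := by
  set ν := gaussianReal 0 1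
  obtain ⟨c, hc, hsmall⟩ := exists_pos_measureReal_Icc_lt ν (b := 0) (ε := 1 / 4)
    (gaussianReal_absolutelyContinuous 0 one_ne_zero (measure_singleton 0)) (by norm_num)
  rw [zero_sub, zero_add] at hsmall
  set m := ∫ x, |x| ∂ν
  have hm : 0 ≤ m := integral_nonneg fun x => abs_nonneg x
  refine ⟨1 / 4, by norm_num, c / (4 * (m + 1)), by positivity, ?_⟩
  set A : ℕ → Set Ω := fun n => {ω | ∑ i ∈ range n, |Z i ω| ≤ (m + 1) * n} ∩
    {ω | ∑ i ∈ range n, (Icc (-c) c).indicator (1 : ℝ → ℝ) (Z i ω) ≤ 1 / 4 * n}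
  have hA : ∀ᵐ ω ∂μ, ∀ᶠ n in atTop, ω ∈ A n := by
    filter_upwards [ae_eventually_sum_comp_le hmeas hindep hgauss measurable_abs
        ((memLp_id_gaussianReal 1).integrable le_rfl).abs (lt_add_one m),
      ae_eventually_sum_comp_le hmeas hindep hgauss (f := (Icc (-c) c).indicator 1)
        (measurable_const.indicator measurableSet_Icc)
        ((integrable_const 1).indicator measurableSet_Icc)
        (by rwa [integral_indicator_one measurableSet_Icc])] with ω h₁ h₂
    exact h₁.and h₂
  have hAmeas : ∀ n, MeasurableSet (A n) := fun n =>
    (measurableSet_le (Finset.measurable_sum _ fun i _ => (hmeas i).abs) measurable_const).inter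
      (measurableSet_le (Finset.measurable_sum _ fun i _ =>
        (measurable_const.indicator measurableSet_Icc).comp (hmeas i)) measurable_const)
  refine tendsto_of_tendsto_of_tendsto_of_le_of_le
    (tendsto_measureReal_one_of_ae_eventually_mem hAmeas hA) tendsto_const_nhds
    (fun n => measureReal_mono ?_) fun n => measureReal_le_one
  rintro ω ⟨habs, hind⟩ v hv hsign
  rw [mem_ofPred_eq, ← Fin.sum_univ_eq_sum_range (fun i => |Z i ω|)] at habs
  rw [mem_ofPred_eq,
    ← Fin.sum_univ_eq_sum_range (fun i => (Icc (-c) c).indicator (1 : ℝ → ℝ) (Z i ω))] at hind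
  refine sum_mul_le_one_sub_mul_sum_abs hc.le (by positivity) (fun i => ?_) ?_ ?_ ?_
  · rcases hv i with h | h <;> simp [h]
  all_goals simpa only [Fintype.card_fin]
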